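/- Fix t ∈ (0,1), θ > 0, β > 0, and nonnegative integers i₁, h₁, i₂, h₂ satisfying i₁ − h₁ = i₂ − h₂, and for ε ∈ (0,1) set B = B(ε) = t(1−t)^{−1}(εθβ)^{−1}. There exist constants C > 0 and ε₀ > 0 depending only on t, θ, β, i₁, h₁, i₂, h₂ such that for all ε ∈ (0, ε₀): |Θ_B(i₁,h₁;i₂,h₂) − 1[i₁ ≥ i₂] · t^{i₂h₂} (t;t)_{h₁}(t;t)_{i₁} / ((t;t)_{h₂}(t;t)_{i₂}(t;t)_{i₁−i₂})| ≤ Cε. -/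

import Mathlib

open Filter Finset

/-- The q-Pochhammer symbol `(a; q)_n` for integer index `n`:
for `n ≥ 0`, `(a;q)_n = ∏_{j=0}^{n-1} (1 - q^j a)`;
for `n = -m < 0`, `(a;q)_{-m} = ∏_{j=1}^{m} (1 - q^{-j} a)⁻¹`. -/
noncomputable def qPoch {K : Type*} [Field K] (a q : K) : ℤ → K := fun n =>
  if 0 ≤ n then ∏ j ∈ Finset.range n.toNat, (1 - q ^ j * a)
  else (∏ j ∈ Finset.range (-n).toNat, (1 - q ^ (-(j : ℤ) - 1) * a))⁻¹

/-- The infinite q-Pochhammer symbol `(a; q)_∞ = ∏_{j=0}^∞ (1 - q^j a)`. -/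
noncomputable def qPochInf {K : Type*} [Field K] [TopologicalSpace K] (a q : K) : K :=
  ∏' j : ℕ, (1 - q ^ j * a)
/-- The limiting weight `Θ_A(i₁, h₁; i₂, h₂)`. -/
noncomputable def Theta {K : Type*} [Field K] [TopologicalSpace K] (t A : K)
    (i1 h1 i2 h2 : ℕ) : K :=
  (if (i1 : ℤ) - (h1 : ℤ) = (i2 : ℤ) - (h2 : ℤ) then (1 : K) else 0) *
  (t ^ (Nat.choose (i2 + 1) 2 + i2 * h1) * A ^ (-(i2 : ℤ)) * qPoch t t (h1 : ℤ) /
    (qPochInf (-(t ^ ((h2 : ℤ) - (i2 : ℤ) + 1)) * A⁻¹) t * qPoch t t (i2 : ℤ) *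
      qPoch t t (h2 : ℤ))) *
  ∑ k ∈ Finset.range (i2 + 1),
    t ^ k * qPoch (t ^ (-(i1 : ℤ))) t (k : ℤ) * qPoch (t ^ (-(i2 : ℤ))) t (k : ℤ) *
      qPoch (-A) t (k : ℤ) *
      qPoch (t ^ ((h2 : ℤ) - (i2 : ℤ) + (k : ℤ) + 1)) t ((i2 : ℤ) - (k : ℤ)) /
      qPoch t t (k : ℤ)

noncomputable def pq (t : ℝ) (n : ℕ) : ℝ := ∏ j ∈ Finset.range n, (1 - t ^ (j + 1))

lemma qPoch_natCast {K : Type*} [Field K] (a q : K) (n : ℕ) :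
    qPoch a q (n : ℤ) = ∏ j ∈ Finset.range n, (1 - q ^ j * a) := by
  simp [qPoch]

lemma qPoch_t_t (t : ℝ) (n : ℕ) : qPoch t t (n : ℤ) = pq t n := by
  rw [qPoch_natCast, pq]
  exact Finset.prod_congr rfl fun j _ => by rw [← pow_succ]

lemma pq_pos {t : ℝ} (ht0 : 0 < t) (ht1 : t < 1) (n : ℕ) : 0 < pq t n := by
  refine Finset.prod_pos fun j _ => ?_
  have : t ^ (j + 1) < 1 := pow_lt_one₀ ht0.le ht1 (Nat.succ_ne_zero j)
  linarith

lemma abs_prod_sub_prod_le (f g : ℕ → ℝ) (M : ℝ) (hM : 1 ≤ M) (s : Finset ℕ)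
    (hf : ∀ i ∈ s, |f i| ≤ M) (hg : ∀ i ∈ s, |g i| ≤ M) :
    |∏ i ∈ s, f i - ∏ i ∈ s, g i| ≤ M ^ s.card * ∑ i ∈ s, |f i - g i| := by
  induction s using Finset.cons_induction with
  | empty => simp
  | cons a s ha ih =>
    rw [Finset.prod_cons, Finset.prod_cons, Finset.sum_cons, Finset.card_cons]
    have hfa := hf a (Finset.mem_cons_self a s)
    have hga := hg a (Finset.mem_cons_self a s)
    have ih' := ih (fun i hi => hf i (Finset.mem_cons_of_mem hi))
      (fun i hi => hg i (Finset.mem_cons_of_mem hi))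
    have hgprod : |∏ i ∈ s, g i| ≤ M ^ s.card := by
      rw [Finset.abs_prod]
      calc ∏ i ∈ s, |g i| ≤ ∏ i ∈ s, M :=
            Finset.prod_le_prod (fun i _ => abs_nonneg _)
              (fun i hi => hg i (Finset.mem_cons_of_mem hi))
        _ = M ^ s.card := by rw [Finset.prod_const]
    have key : f a * ∏ i ∈ s, f i - g a * ∏ i ∈ s, g i
        = f a * (∏ i ∈ s, f i - ∏ i ∈ s, g i) + (f a - g a) * ∏ i ∈ s, g i := by ring
    rw [key]
    have hMp : (0:ℝ) ≤ M ^ s.card := by positivity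
    have hsum : (0:ℝ) ≤ ∑ i ∈ s, |f i - g i| :=
      Finset.sum_nonneg (fun i _ => abs_nonneg _)
    calc |f a * (∏ i ∈ s, f i - ∏ i ∈ s, g i) + (f a - g a) * ∏ i ∈ s, g i|
        ≤ |f a| * |∏ i ∈ s, f i - ∏ i ∈ s, g i| + |f a - g a| * |∏ i ∈ s, g i| := by
          refine (abs_add_le _ _).trans ?_
          rw [abs_mul, abs_mul]
      _ ≤ M * (M ^ s.card * ∑ i ∈ s, |f i - g i|) + |f a - g a| * M ^ s.card := by
          refine add_le_add (mul_le_mul hfa ih' (abs_nonneg _) (by linarith)) ?_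
          exact mul_le_mul_of_nonneg_left hgprod (abs_nonneg _)
      _ ≤ M ^ (s.card + 1) * (|f a - g a| + ∑ i ∈ s, |f i - g i|) := by
          rw [pow_succ]
          nlinarith [mul_nonneg (mul_nonneg (sub_nonneg.2 hM) hMp) (abs_nonneg (f a - g a))]

lemma tprod_one_add_bounds (c : ℕ → ℝ) (hc : ∀ j, 0 ≤ c j) (hs : Summable c) :
    1 ≤ ∏' j, (1 + c j) ∧ ∏' j, (1 + c j) ≤ Real.exp (∑' j, c j) := by
  by_cases h : Multipliable (fun j => 1 + c j)
  · have hp := h.hasProd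
    constructor
    · refine ge_of_tendsto' hp fun s => ?_
      calc (1:ℝ) = ∏ j ∈ s, 1 := by simp
        _ ≤ ∏ j ∈ s, (1 + c j) :=
            Finset.prod_le_prod (fun i _ => zero_le_one) (fun i _ => by linarith [hc i])
    · refine le_of_tendsto' hp fun s => ?_
      calc ∏ j ∈ s, (1 + c j) ≤ ∏ j ∈ s, Real.exp (c j) :=
            Finset.prod_le_prod (fun i _ => by linarith [hc i])
              (fun i _ => by rw [add_comm]; exact Real.add_one_le_exp (c i))
        _ = Real.exp (∑ j ∈ s, c j) := (Real.exp_sum s c).symm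
        _ ≤ Real.exp (∑' j, c j) := by
            exact Real.exp_le_exp.2 (Summable.sum_le_tsum s (fun i _ => hc i) hs)
  · rw [tprod_eq_one_of_not_multipliable h]
    exact ⟨le_refl 1, Real.one_le_exp (tsum_nonneg hc)⟩

lemma sum_range_id_choose (n : ℕ) : ∑ j ∈ Finset.range n, j = n.choose 2 := by
  induction n with
  | zero => simp
  | succ n ih =>
    rw [Finset.sum_range_succ, ih, Nat.choose_succ_succ n 1, Nat.choose_one_right, add_comm]

lemma prod_zpow_eq (t : ℝ) (ht : t ≠ 0) (s : Finset ℕ) (f : ℕ → ℤ) :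
    ∏ j ∈ s, t ^ f j = t ^ (∑ j ∈ s, f j) := by
  induction s using Finset.cons_induction with
  | empty => simp
  | cons a s ha ih => rw [Finset.prod_cons, Finset.sum_cons, ih, zpow_add₀ ht]

lemma prod_one_sub_pow_eq {t : ℝ} (ht0 : 0 < t) (ht1 : t < 1) (n k : ℕ) (hkn : k ≤ n) :
    ∏ j ∈ Finset.range k, (1 - t ^ (n - j)) = pq t n / pq t (n - k) := by
  have h1 : ∏ j ∈ Finset.range k, (1 - t ^ (n - j))
      = ∏ j ∈ Finset.range k, (1 - t ^ ((n - k) + j + 1)) := by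
    rw [← Finset.prod_range_reflect (fun j => 1 - t ^ (n - j)) k]
    refine Finset.prod_congr rfl fun j hj => ?_
    have hj' : j < k := Finset.mem_range.1 hj
    have : n - (k - 1 - j) = n - k + j + 1 := by omega
    rw [this]
  have h2 : pq t n = pq t (n - k) * ∏ j ∈ Finset.range k, (1 - t ^ ((n - k) + j + 1)) := by
    conv_lhs => rw [pq, show n = (n - k) + k by omega, Finset.prod_range_add]
    rfl
  rw [h1, h2, mul_comm, mul_div_assoc, div_self (ne_of_gt (pq_pos ht0 ht1 (n - k))), mul_one]

lemma qPoch_tpow_neg (t : ℝ) (ht0 : 0 < t) (ht1 : t < 1) (n k : ℕ) (hkn : k ≤ n) :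
    qPoch (t ^ (-(n : ℤ))) t (k : ℤ)
      = (-1) ^ k * t ^ ((∑ j ∈ Finset.range k, (j : ℤ)) - n * k) * (pq t n / pq t (n - k)) := by
  have ht : t ≠ 0 := ne_of_gt ht0
  rw [qPoch_natCast]
  have hfac : ∀ j ∈ Finset.range k, (1 - t ^ j * t ^ (-(n:ℤ)))
      = (-1) * t ^ ((j:ℤ) - n) * (1 - t ^ (n - j)) := by
    intro j hj
    have hj' : j < k := Finset.mem_range.1 hj
    have e1 : t ^ (n - j) = t ^ (((n:ℤ) - j)) := by
      rw [← zpow_natCast t (n - j)]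
      congr 1
      omega
    have e2 : t ^ j * t ^ (-(n:ℤ)) = t ^ ((j:ℤ) - n) := by
      rw [← zpow_natCast t j, ← zpow_add₀ ht, sub_eq_add_neg]
    have e3 : t ^ ((j:ℤ) - n) * t ^ ((n:ℤ) - j) = 1 := by
      rw [← zpow_add₀ ht]; norm_num
    rw [e1, e2]
    linear_combination -e3
  rw [Finset.prod_congr rfl hfac]
  rw [Finset.prod_mul_distrib, Finset.prod_mul_distrib, Finset.prod_const,
    prod_zpow_eq t ht, prod_one_sub_pow_eq ht0 ht1 n k hkn, Finset.card_range]
  rw [Finset.sum_sub_distrib, Finset.sum_const, Finset.card_range]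
  congr 2
  push_cast
  ring

lemma qPoch_tpow_neg_zero (t : ℝ) (ht0 : 0 < t) (n k : ℕ) (hnk : n < k) :
    qPoch (t ^ (-(n : ℤ))) t (k : ℤ) = 0 := by
  rw [qPoch_natCast]
  refine Finset.prod_eq_zero (Finset.mem_range.2 hnk) ?_
  rw [← zpow_natCast t n, ← zpow_add₀ (ne_of_gt ht0)]
  simp

noncomputable def coefA (t : ℝ) (i1 i2 h2 k : ℕ) : ℝ :=
  t ^ k * qPoch (t ^ (-(i1 : ℤ))) t (k : ℤ) * qPoch (t ^ (-(i2 : ℤ))) t (k : ℤ) *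
    qPoch (t ^ ((h2 : ℤ) - (i2 : ℤ) + (k : ℤ) + 1)) t ((i2 : ℤ) - (k : ℤ)) / pq t k

noncomputable def Gf (t : ℝ) (i1 i2 h2 : ℕ) (x : ℝ) : ℝ :=
  ∑ k ∈ Finset.range (i2 + 1),
    coefA t i1 i2 h2 k * (x ^ (i2 - k) * ∏ j ∈ Finset.range k, (x + t ^ j))

lemma theta_eq (t : ℝ) (ht0 : 0 < t) (i1 h1 i2 h2 : ℕ)
    (hcons : (i1 : ℤ) - (h1 : ℤ) = (i2 : ℤ) - (h2 : ℤ)) (x : ℝ) (hx : 0 < x) :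
    Theta t x⁻¹ i1 h1 i2 h2 =
      (t ^ (Nat.choose (i2 + 1) 2 + i2 * h1) * pq t h1 / (pq t i2 * pq t h2)) *
        Gf t i1 i2 h2 x / qPochInf (-(t ^ ((h2 : ℤ) - (i2 : ℤ) + 1)) * x) t := by
  have hxne : x ≠ 0 := ne_of_gt hx
  have hA : (x⁻¹ : ℝ) ^ (-(i2 : ℤ)) = x ^ i2 := by
    rw [inv_zpow, zpow_neg, inv_inv, zpow_natCast]
  have hsum : x ^ i2 * (∑ k ∈ Finset.range (i2 + 1),
      t ^ k * qPoch (t ^ (-(i1 : ℤ))) t (k : ℤ) * qPoch (t ^ (-(i2 : ℤ))) t (k : ℤ) *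
        qPoch (-x⁻¹) t (k : ℤ) *
        qPoch (t ^ ((h2 : ℤ) - (i2 : ℤ) + (k : ℤ) + 1)) t ((i2 : ℤ) - (k : ℤ)) /
        qPoch t t (k : ℤ)) = Gf t i1 i2 h2 x := by
    rw [Finset.mul_sum, Gf]
    refine Finset.sum_congr rfl fun k hk => ?_
    have hk' : k ≤ i2 := by have := Finset.mem_range.1 hk; omega
    have hq : x ^ k * qPoch (-x⁻¹) t (k : ℤ) = ∏ j ∈ Finset.range k, (x + t ^ j) := by
      rw [qPoch_natCast,
        show x ^ k = ∏ _j ∈ Finset.range k, x by rw [Finset.prod_const, Finset.card_range],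
        ← Finset.prod_mul_distrib]
      refine Finset.prod_congr rfl fun j _ => ?_
      field_simp
      ring
    have hx2 : x ^ i2 = x ^ (i2 - k) * x ^ k := by
      rw [← pow_add]
      congr 1
      omega
    rw [qPoch_t_t, coefA, hx2, ← hq]
    ring
  rw [Theta, if_pos hcons, one_mul, qPoch_t_t, qPoch_t_t, qPoch_t_t, hA, inv_inv, ← hsum]
  ring

lemma qPoch_zero {K : Type*} [Field K] (a q : K) : qPoch a q 0 = 1 := by simp [qPoch]

lemma pq_zero (t : ℝ) : pq t 0 = 1 := by simp [pq]

lemma Gf_zero (t : ℝ) (i1 i2 h2 : ℕ) :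
    Gf t i1 i2 h2 0 = coefA t i1 i2 h2 i2 * ∏ j ∈ Finset.range i2, t ^ j := by
  rw [Gf]
  rw [Finset.sum_eq_single_of_mem i2 (Finset.self_mem_range_succ i2)]
  · rw [Nat.sub_self, pow_zero, one_mul]
    congr 1
    exact Finset.prod_congr rfl fun j _ => zero_add _
  · intro k hk hne
    have hk' : k < i2 := by have := Finset.mem_range.1 hk; omega
    rw [zero_pow (by omega : i2 - k ≠ 0), zero_mul, mul_zero]

lemma limit_eq (t : ℝ) (ht0 : 0 < t) (ht1 : t < 1) (i1 h1 i2 h2 : ℕ)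
    (hcons : (i1 : ℤ) - (h1 : ℤ) = (i2 : ℤ) - (h2 : ℤ)) :
    (t ^ (Nat.choose (i2 + 1) 2 + i2 * h1) * pq t h1 / (pq t i2 * pq t h2)) *
        Gf t i1 i2 h2 0 =
      if i2 ≤ i1 then
        t ^ (i2 * h2) * pq t h1 * pq t i1 / (pq t h2 * pq t i2 * pq t (i1 - i2))
      else 0 := by
  have ht : t ≠ 0 := ne_of_gt ht0
  rw [Gf_zero]
  by_cases h : i2 ≤ i1
  · rw [if_pos h, coefA]
    -- facts about exponents
    have hgauss := Finset.sum_range_id_mul_two i2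
    have hch := sum_range_id_choose (i2 + 1)
    rw [Finset.sum_range_succ] at hch
    have h2' : 2 * ((∑ j ∈ Finset.range i2, j : ℕ) : ℤ) = (i2 : ℤ) * i2 - i2 := by
      rcases Nat.eq_zero_or_pos i2 with h0 | hpos
      · subst h0; simp
      · zify [hpos] at hgauss
        push_cast
        linear_combination hgauss
    have hS : (∑ j ∈ Finset.range i2, (j : ℤ)) = ((∑ j ∈ Finset.range i2, j : ℕ) : ℤ) := by
      push_cast
      rfl
    set s : ℕ := ∑ j ∈ Finset.range i2, j with hs
    have h1' : ((Nat.choose (i2 + 1) 2 : ℕ) : ℤ) = (s : ℤ) + i2 := by omega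
    have h3' : (i2 : ℤ) + h1 = (i1 : ℤ) + h2 := by omega
    -- sign-free product of the two finite q-Pochhammer factors
    have hsq : ((-1 : ℝ)) ^ i2 * (-1 : ℝ) ^ i2 = 1 := by
      rw [← pow_add]
      exact Even.neg_one_pow ⟨i2, rfl⟩
    have hQQ : qPoch (t ^ (-(i1 : ℤ))) t (i2 : ℤ) * qPoch (t ^ (-(i2 : ℤ))) t (i2 : ℤ)
        = t ^ ((s : ℤ) - i1 * i2) * (pq t i1 / pq t (i1 - i2)) *
          (t ^ ((s : ℤ) - i2 * i2) * pq t i2) := by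
      rw [qPoch_tpow_neg t ht0 ht1 i1 i2 h, qPoch_tpow_neg t ht0 ht1 i2 i2 le_rfl,
        Nat.sub_self, pq_zero, hS]
      linear_combination (t ^ ((s : ℤ) - i1 * i2) * (pq t i1 / pq t (i1 - i2)) *
        (t ^ ((s : ℤ) - i2 * i2) * pq t i2)) * hsq
    rw [sub_self ((i2 : ℤ)), qPoch_zero,
      mul_assoc (t ^ i2) (qPoch (t ^ (-(i1 : ℤ))) t (i2 : ℤ)) _, hQQ,
      Finset.prod_pow_eq_pow_sum, ← hs]
    -- convert nat powers of t into zpow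
    have e1 : t ^ (Nat.choose (i2 + 1) 2 + i2 * h1)
        = t ^ ((Nat.choose (i2 + 1) 2 + i2 * h1 : ℕ) : ℤ) := by rw [zpow_natCast]
    have e2 : t ^ i2 = t ^ ((i2 : ℕ) : ℤ) := by rw [zpow_natCast]
    have e3 : t ^ s = t ^ ((s : ℕ) : ℤ) := by rw [zpow_natCast]
    have e4 : t ^ (i2 * h2) = t ^ ((i2 * h2 : ℕ) : ℤ) := by rw [zpow_natCast]
    rw [e1, e2, e3, e4]
    have key : t ^ ((Nat.choose (i2 + 1) 2 + i2 * h1 : ℕ) : ℤ) * t ^ ((i2 : ℕ) : ℤ) *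
        t ^ ((s : ℤ) - i1 * i2) * t ^ ((s : ℤ) - i2 * i2) * t ^ ((s : ℕ) : ℤ)
        = t ^ ((i2 * h2 : ℕ) : ℤ) := by
      rw [← zpow_add₀ ht, ← zpow_add₀ ht, ← zpow_add₀ ht, ← zpow_add₀ ht]
      congr 1
      push_cast
      push_cast at h1' h2' h3'
      linear_combination h1' + 2 * h2' + (i2 : ℤ) * h3'
    have hpq2 : pq t i2 ≠ 0 := ne_of_gt (pq_pos ht0 ht1 i2)
    have hpqh : pq t h2 ≠ 0 := ne_of_gt (pq_pos ht0 ht1 h2)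
    have hpq12 : pq t (i1 - i2) ≠ 0 := ne_of_gt (pq_pos ht0 ht1 (i1 - i2))
    set T1 := t ^ ((Nat.choose (i2 + 1) 2 + i2 * h1 : ℕ) : ℤ) with hT1
    set T2 := t ^ ((i2 : ℕ) : ℤ) with hT2
    set T3 := t ^ ((s : ℤ) - i1 * i2) with hT3
    set T4 := t ^ ((s : ℤ) - i2 * i2) with hT4
    set T5 := t ^ ((s : ℕ) : ℤ) with hT5
    set T6 := t ^ ((i2 * h2 : ℕ) : ℤ) with hT6
    rw [← key]
    field_simp
  · rw [if_neg h, coefA, qPoch_tpow_neg_zero t ht0 i1 i2 (by omega)]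
    ring

lemma Gf_lipschitz (t : ℝ) (ht0 : 0 < t) (ht1 : t < 1) (i1 i2 h2 : ℕ) (x : ℝ)
    (hx0 : 0 ≤ x) (hx1 : x ≤ 1) :
    |Gf t i1 i2 h2 x - Gf t i1 i2 h2 0| ≤
      ((∑ k ∈ Finset.range (i2 + 1), |coefA t i1 i2 h2 k|) * ((i2 + 1) * 2 ^ i2)) * x := by
  rw [Gf, Gf, ← Finset.sum_sub_distrib]
  refine (Finset.abs_sum_le_sum_abs _ _).trans ?_
  have hbound : ∀ k ∈ Finset.range (i2 + 1),
      |coefA t i1 i2 h2 k * (x ^ (i2 - k) * ∏ j ∈ Finset.range k, (x + t ^ j)) -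
        coefA t i1 i2 h2 k * ((0:ℝ) ^ (i2 - k) * ∏ j ∈ Finset.range k, ((0:ℝ) + t ^ j))|
      ≤ |coefA t i1 i2 h2 k| * (((i2 + 1) * 2 ^ i2) * x) := by
    intro k hk
    have hk' : k ≤ i2 := by have := Finset.mem_range.1 hk; omega
    rw [← mul_sub, abs_mul]
    refine mul_le_mul_of_nonneg_left ?_ (abs_nonneg _)
    have hprod_le : ∏ j ∈ Finset.range k, (x + t ^ j) ≤ 2 ^ i2 := by
      calc ∏ j ∈ Finset.range k, (x + t ^ j) ≤ ∏ j ∈ Finset.range k, 2 := by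
            refine Finset.prod_le_prod (fun j _ => by positivity) (fun j _ => ?_)
            have : t ^ j ≤ 1 := pow_le_one₀ ht0.le ht1.le
            linarith
        _ = 2 ^ k := by rw [Finset.prod_const, Finset.card_range]
        _ ≤ 2 ^ i2 := pow_le_pow_right₀ one_le_two hk'
    have hprod_nn : (0:ℝ) ≤ ∏ j ∈ Finset.range k, (x + t ^ j) :=
      Finset.prod_nonneg fun j _ => by positivity
    rcases eq_or_lt_of_le hk' with heq | hlt
    · subst heq
      rw [Nat.sub_self, pow_zero, pow_zero, one_mul, one_mul]
      have happ := abs_prod_sub_prod_le (fun j => x + t ^ j) (fun j => (0:ℝ) + t ^ j) 2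
        one_le_two (Finset.range k)
        (fun j _ => by
          show |x + t ^ j| ≤ 2
          rw [abs_of_nonneg (by positivity)]
          have : t ^ j ≤ 1 := pow_le_one₀ ht0.le ht1.le
          linarith)
        (fun j _ => by
          show |(0:ℝ) + t ^ j| ≤ 2
          rw [abs_of_nonneg (by positivity)]
          have : t ^ j ≤ 1 := pow_le_one₀ ht0.le ht1.le
          linarith)
      refine happ.trans ?_
      have hsum : ∑ j ∈ Finset.range k, |x + t ^ j - ((0:ℝ) + t ^ j)| = k * x := by
        have : ∀ j ∈ Finset.range k, |x + t ^ j - ((0:ℝ) + t ^ j)| = x := fun j _ => by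
          rw [show x + t ^ j - ((0:ℝ) + t ^ j) = x by ring, abs_of_nonneg hx0]
        rw [Finset.sum_congr rfl this, Finset.sum_const, Finset.card_range, nsmul_eq_mul]
      rw [hsum, Finset.card_range]
      nlinarith [mul_nonneg (pow_nonneg (by norm_num : (0:ℝ) ≤ 2) k) hx0]
    · -- k < i2
      have hz : ((0:ℝ)) ^ (i2 - k) = 0 := zero_pow (by omega)
      rw [hz, zero_mul, sub_zero, abs_of_nonneg (by positivity)]
      have hxp : x ^ (i2 - k) ≤ x := by
        calc x ^ (i2 - k) ≤ x ^ 1 := pow_le_pow_of_le_one hx0 hx1 (by omega)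
          _ = x := pow_one x
      calc x ^ (i2 - k) * ∏ j ∈ Finset.range k, (x + t ^ j)
          ≤ x * 2 ^ i2 := by
            refine mul_le_mul hxp hprod_le hprod_nn hx0
        _ ≤ ((i2 + 1) * 2 ^ i2) * x := by
            nlinarith [mul_nonneg (mul_nonneg (Nat.cast_nonneg (α := ℝ) i2)
              (pow_nonneg (by norm_num : (0:ℝ) ≤ 2) i2)) hx0]
  refine (Finset.sum_le_sum hbound).trans ?_
  rw [← Finset.sum_mul]
  exact le_of_eq (by ring)

lemma qPochInf_bounds (t : ℝ) (ht0 : 0 < t) (ht1 : t < 1) (m : ℤ) (x : ℝ) (hx : 0 ≤ x) :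
    1 ≤ qPochInf (-(t ^ m) * x) t ∧
      qPochInf (-(t ^ m) * x) t ≤ Real.exp (t ^ m * x * (1 - t)⁻¹) := by
  have htm : (0:ℝ) < t ^ m := zpow_pos ht0 m
  have hform : qPochInf (-(t ^ m) * x) t = ∏' j : ℕ, (1 + (t ^ m * x) * t ^ j) := by
    rw [qPochInf]
    exact tprod_congr fun j => by ring
  have hc : ∀ j : ℕ, 0 ≤ (t ^ m * x) * t ^ j := fun j => by positivity
  have hsum : Summable (fun j : ℕ => (t ^ m * x) * t ^ j) :=
    (summable_geometric_of_lt_one ht0.le ht1).mul_left _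
  have htsum : ∑' j : ℕ, (t ^ m * x) * t ^ j = t ^ m * x * (1 - t)⁻¹ := by
    rw [tsum_mul_left, tsum_geometric_of_lt_one ht0.le ht1]
  obtain ⟨hb1, hb2⟩ := tprod_one_add_bounds (fun j => (t ^ m * x) * t ^ j) hc hsum
  rw [htsum] at hb2
  rw [hform]
  exact ⟨hb1, hb2⟩

set_option maxHeartbeats 1000000 in
/-- general asymptotics of `Θ_B(i₁,h₁;i₂,h₂)` for `B = t(1-t)⁻¹(εθβ)⁻¹`
as `ε → 0`, under the conservation condition `i₁ - h₁ = i₂ - h₂`. -/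
theorem theta_asymptotics_general (t θ β : ℝ) (ht0 : 0 < t) (ht1 : t < 1) (hθ : 0 < θ)
    (hβ : 0 < β) (i1 h1 i2 h2 : ℕ) (hcons : (i1 : ℤ) - (h1 : ℤ) = (i2 : ℤ) - (h2 : ℤ)) :
    ∃ C > (0 : ℝ), ∃ ε₀ > (0 : ℝ), ε₀ ≤ 1 ∧
      ∀ ε : ℝ, 0 < ε → ε < ε₀ →
        |Theta t (t / ((1 - t) * (ε * θ * β))) i1 h1 i2 h2 -
          (if i2 ≤ i1 then
            t ^ (i2 * h2) * qPoch t t (h1 : ℤ) * qPoch t t (i1 : ℤ) /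
              (qPoch t t (h2 : ℤ) * qPoch t t (i2 : ℤ) * qPoch t t ((i1 - i2 : ℕ) : ℤ))
          else 0)| ≤ C * ε := by

  have h1t : (0:ℝ) < 1 - t := by linarith
  have ht : t ≠ 0 := ne_of_gt ht0
  set cc : ℝ := (1 - t) * θ * β / t with hccdef
  have hccpos : 0 < cc := div_pos (mul_pos (mul_pos h1t hθ) hβ) ht0
  set CG : ℝ := (∑ k ∈ Finset.range (i2 + 1), |coefA t i1 i2 h2 k|) * ((i2 + 1) * 2 ^ i2)
    with hCG
  set S : ℝ := t ^ ((h2 : ℤ) - (i2 : ℤ) + 1) * (1 - t)⁻¹ with hS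
  have hSnn : 0 ≤ S := by
    have := zpow_pos ht0 ((h2 : ℤ) - (i2 : ℤ) + 1)
    positivity
  set G0 : ℝ := Gf t i1 i2 h2 0 with hG0
  set c0 : ℝ := t ^ (Nat.choose (i2 + 1) 2 + i2 * h1) * pq t h1 / (pq t i2 * pq t h2)
    with hc0
  set K : ℝ := |c0| * (CG + |G0| * (S * Real.exp S)) with hK
  have hKnn : 0 ≤ K := by
    have h1 : 0 ≤ |c0| := abs_nonneg _
    have h2 : 0 ≤ CG := by
      rw [hCG]
      have : (0:ℝ) ≤ ∑ k ∈ Finset.range (i2 + 1), |coefA t i1 i2 h2 k| :=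
        Finset.sum_nonneg fun k _ => abs_nonneg _
      positivity
    have h3 : 0 ≤ |G0| * (S * Real.exp S) := by
      have := Real.exp_pos S
      positivity
    nlinarith
  refine ⟨K * cc + 1, by positivity, min 1 cc⁻¹, lt_min one_pos (by positivity),
    min_le_left _ _, ?_⟩
  intro ε hε hεlt
  set x : ℝ := (1 - t) * (ε * θ * β) / t with hxdef
  have hx : 0 < x := div_pos (mul_pos h1t (mul_pos (mul_pos hε hθ) hβ)) ht0
  have hxcc : x = cc * ε := by rw [hxdef, hccdef]; ring
  have hx1 : x ≤ 1 := by
    have hεcc : ε ≤ cc⁻¹ := le_of_lt (lt_of_lt_of_le hεlt (min_le_right _ _))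
    calc x = cc * ε := hxcc
      _ ≤ cc * cc⁻¹ := mul_le_mul_of_nonneg_left hεcc hccpos.le
      _ = 1 := mul_inv_cancel₀ (ne_of_gt hccpos)
  have hA : t / ((1 - t) * (ε * θ * β)) = x⁻¹ := by rw [hxdef, inv_div]
  rw [hA, theta_eq t ht0 i1 h1 i2 h2 hcons x hx]
  simp only [qPoch_t_t]
  rw [← limit_eq t ht0 ht1 i1 h1 i2 h2 hcons]
  set P : ℝ := qPochInf (-(t ^ ((h2 : ℤ) - (i2 : ℤ) + 1)) * x) t with hP
  obtain ⟨hP1, hP2⟩ := qPochInf_bounds t ht0 ht1 ((h2 : ℤ) - (i2 : ℤ) + 1) x hx.le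
  have hPpos : (0:ℝ) < P := lt_of_lt_of_le one_pos hP1
  set Gx : ℝ := Gf t i1 i2 h2 x with hGx
  have hsplit : c0 * Gx / P - c0 * G0 = c0 * ((Gx - G0) - G0 * (P - 1)) / P := by
    field_simp
    ring
  rw [hsplit]
  have hGb : |Gx - G0| ≤ CG * x := Gf_lipschitz t ht0 ht1 i1 i2 h2 x hx.le hx1
  have hPb : P - 1 ≤ (S * Real.exp S) * x := by
    have hexp : t ^ ((h2 : ℤ) - (i2 : ℤ) + 1) * x * (1 - t)⁻¹ = S * x := by
      rw [hS]; ring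
    rw [hexp] at hP2
    have hy : 0 ≤ S * x := mul_nonneg hSnn hx.le
    have key1 : Real.exp (S * x) - 1 ≤ (S * x) * Real.exp (S * x) := by
      have h := Real.add_one_le_exp (-(S * x))
      rw [Real.exp_neg] at h
      have hinv : (Real.exp (S * x))⁻¹ * Real.exp (S * x) = 1 :=
        inv_mul_cancel₀ (ne_of_gt (Real.exp_pos _))
      nlinarith [mul_le_mul_of_nonneg_right h (Real.exp_pos (S * x)).le, hinv]
    have key2 : Real.exp (S * x) ≤ Real.exp S :=
      Real.exp_le_exp.2 (mul_le_of_le_one_right hSnn hx1)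
    calc P - 1 ≤ Real.exp (S * x) - 1 := by linarith
      _ ≤ (S * x) * Real.exp (S * x) := key1
      _ ≤ (S * x) * Real.exp S := mul_le_mul_of_nonneg_left key2 hy
      _ = (S * Real.exp S) * x := by ring
  have habs : |c0 * ((Gx - G0) - G0 * (P - 1)) / P| ≤ |c0| * (|Gx - G0| + |G0| * (P - 1)) := by
    rw [abs_div, abs_mul, abs_of_pos hPpos]
    have hnum : |(Gx - G0) - G0 * (P - 1)| ≤ |Gx - G0| + |G0| * (P - 1) := by
      refine (abs_sub _ _).trans ?_
      rw [abs_mul, abs_of_nonneg (by linarith : (0:ℝ) ≤ P - 1)]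
    calc |c0| * |(Gx - G0) - G0 * (P - 1)| / P ≤ |c0| * |(Gx - G0) - G0 * (P - 1)| := by
          refine div_le_self (by positivity) hP1
      _ ≤ |c0| * (|Gx - G0| + |G0| * (P - 1)) :=
          mul_le_mul_of_nonneg_left hnum (abs_nonneg _)
  refine habs.trans ?_
  have hstep : |c0| * (|Gx - G0| + |G0| * (P - 1)) ≤ K * x := by
    rw [hK]
    have h1 : |Gx - G0| + |G0| * (P - 1) ≤ CG * x + |G0| * ((S * Real.exp S) * x) :=
      add_le_add hGb (mul_le_mul_of_nonneg_left hPb (abs_nonneg _))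
    have h2 : CG * x + |G0| * ((S * Real.exp S) * x) = (CG + |G0| * (S * Real.exp S)) * x := by
      ring
    calc |c0| * (|Gx - G0| + |G0| * (P - 1))
        ≤ |c0| * ((CG + |G0| * (S * Real.exp S)) * x) := by
          rw [← h2]
          exact mul_le_mul_of_nonneg_left h1 (abs_nonneg _)
      _ = |c0| * (CG + |G0| * (S * Real.exp S)) * x := by ring
  refine hstep.trans ?_
  rw [hxcc]
  calc K * (cc * ε) = (K * cc) * ε := by ring
    _ ≤ (K * cc + 1) * ε := by nlinarith
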